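/- arXiv:math/0306328 — 4 statements merged into one kernel-verified Lean document; each statement's English description precedes it below -/
import Mathlib

section
/- Fix x ∈ ℂ³ nonzero with associated rank-one symmetric tensor x·xᵀ. The set of 3×3 complex symmetric matrices of rank ≤ 1 that are orthogonal (under the trace form) to the tangent space of the rank-one locus at x·xᵀ is {y·yᵀ : ⟨x,y⟩ = 0}, i.e., rank-one symmetric matrices built from vectors orthogonal to x. -/
/-!
Over an algebraically closed field a symmetric matrix of rank at most one is `y·yᵀ`: its columns
are multiples of a single vector `u`, so it is `u·vᵀ`, symmetry forces `v = c • u`, and a square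
root of `c` is absorbed into `u`. For `A = y·yᵀ` the pairing with a tangent vector `x·vᵀ + v·xᵀ`
is `2 ⟨x,y⟩ ⟨y,v⟩`, which vanishes for all `v` iff `⟨x,y⟩ = 0` (take `v = x`).
-/

open Matrix

theorem Matrix.exists_eq_vecMulVec_of_rank_le_one {K m n : Type*} [Field K] [Fintype m]
    [Fintype n] {A : Matrix m n K} (hA : A.rank ≤ 1) : ∃ u v, A = vecMulVec u v := by
  rw [rank_eq_finrank_span_cols, finrank_le_one_iff] at hA
  obtain ⟨u, hu⟩ := hA
  choose c hc using fun j => hu ⟨A.col j, Submodule.subset_span ⟨j, rfl⟩⟩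
  refine ⟨u, c, Matrix.ext fun i j => ?_⟩
  have := congrFun (congrArg Subtype.val (hc j)) i
  simp only [SetLike.val_smul, Pi.smul_apply, smul_eq_mul, col_apply] at this
  rw [vecMulVec_apply, ← this, mul_comm]

theorem Matrix.exists_eq_vecMulVec_self_of_isSymm_of_rank_le_one {K n : Type*} [Field K]
    [IsAlgClosed K] [Fintype n] {A : Matrix n n K} (hs : A.IsSymm) (hr : A.rank ≤ 1) :
    ∃ y, A = vecMulVec y y := by
  obtain ⟨u, v, rfl⟩ := exists_eq_vecMulVec_of_rank_le_one hr
  by_cases hu : u = 0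
  · exact ⟨0, by simp [hu]⟩
  obtain ⟨i, hi⟩ := Function.ne_iff.mp hu
  have hv : v = (v i / u i) • u := funext fun j => by
    have := congrFun₂ hs i j
    simp only [transpose_apply, vecMulVec_apply] at this
    rw [Pi.smul_apply, smul_eq_mul, div_mul_eq_mul_div, eq_div_iff hi]
    linear_combination -this
  obtain ⟨s, hs2⟩ := IsAlgClosed.exists_pow_nat_eq (v i / u i) two_pos
  refine ⟨s • u, ?_⟩
  rw [hv, ← hs2, smul_vecMulVec, vecMulVec_smul, vecMulVec_smul, smul_smul, sq]

theorem Matrix.trace_vecMulVec_mul_vecMulVec {R n : Type*} [CommSemiring R] [Fintype n]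
    (a b c d : n → R) : trace (vecMulVec a b * vecMulVec c d) = (b ⬝ᵥ c) * (a ⬝ᵥ d) := by
  rw [vecMulVec_mul_vecMulVec, trace_vecMulVec, dotProduct_smul, smul_eq_mul]

theorem Matrix.forall_trace_vecMulVec_self_mul_symm_eq_zero_iff {R n : Type*} [CommRing R]
    [IsDomain R] [NeZero (2 : R)] [Fintype n] (x y : n → R) :
    (∀ v, trace (vecMulVec y y * (vecMulVec x v + vecMulVec v x)) = 0) ↔ x ⬝ᵥ y = 0 := by
  have key : ∀ v, trace (vecMulVec y y * (vecMulVec x v + vecMulVec v x))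
      = 2 * (x ⬝ᵥ y) * (y ⬝ᵥ v) := fun v => by
    rw [Matrix.mul_add, trace_add, trace_vecMulVec_mul_vecMulVec,
      trace_vecMulVec_mul_vecMulVec, dotProduct_comm y x]
    ring
  refine ⟨fun h => ?_, fun h v => by rw [key, h, mul_zero, zero_mul]⟩
  have := h x
  rw [key, dotProduct_comm y x, mul_assoc, ← sq] at this
  exact pow_eq_zero_iff two_ne_zero |>.mp ((mul_eq_zero.mp this).resolve_left two_ne_zero)

theorem stmt_9_general (x : Fin 3 → ℂ) :
    {A : Matrix (Fin 3) (Fin 3) ℂ | Aᵀ = A ∧ A.rank ≤ 1 ∧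
      ∀ v : Fin 3 → ℂ, (A * (vecMulVec x v + vecMulVec v x)).trace = 0}
    = {A : Matrix (Fin 3) (Fin 3) ℂ |
        ∃ y : Fin 3 → ℂ, A = vecMulVec y y ∧ ∑ i, x i * y i = 0} := by
  ext A
  constructor
  · rintro ⟨hs, hr, horth⟩
    obtain ⟨y, rfl⟩ := exists_eq_vecMulVec_self_of_isSymm_of_rank_le_one hs hr
    exact ⟨y, rfl, (forall_trace_vecMulVec_self_mul_symm_eq_zero_iff x y).mp horth⟩
  · rintro ⟨y, rfl, hxy⟩
    exact ⟨transpose_vecMulVec y y, rank_vecMulVec_le y y,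
      (forall_trace_vecMulVec_self_mul_symm_eq_zero_iff x y).mpr hxy⟩

/-- For `x ∈ ℂ³` nonzero, the rank ≤ 1 symmetric 3×3 matrices that are orthogonal,
for the trace form, to the tangent space `{x·vᵀ + v·xᵀ}` of the rank-one locus at
`x·xᵀ`, are exactly the matrices `y·yᵀ` with `⟨x,y⟩ = 0`. -/
theorem stmt_9 (x : Fin 3 → ℂ) (hx : x ≠ 0) :
    {A : Matrix (Fin 3) (Fin 3) ℂ | Aᵀ = A ∧ A.rank ≤ 1 ∧
      ∀ v : Fin 3 → ℂ, (A * (vecMulVec x v + vecMulVec v x)).trace = 0}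
    = {A : Matrix (Fin 3) (Fin 3) ℂ |
        ∃ y : Fin 3 → ℂ, A = vecMulVec y y ∧ ∑ i, x i * y i = 0} :=
  stmt_9_general x
end

section
/- In the complexified quaternions M₂(ℂ) (equivalently any complex composition algebra of dimension ≥ 1 that is associative or alternative), if v is an imaginary element with q(v) ≠ 0, then the endomorphism ψ_v(t) = tv + 2vt of the algebra is injective. -/
open Matrix

/-- In the complexified quaternions `M₂(ℂ)` (imaginary elements are the traceless
matrices, and the norm is the determinant), if `v` is imaginary with `q(v) ≠ 0`,
then `ψ_v(t) = tv + 2vt` is injective. -/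
theorem stmt_10 (v : Matrix (Fin 2) (Fin 2) ℂ)
    (him : v.trace = 0) (hq : v.det ≠ 0) :
    Function.Injective (fun t : Matrix (Fin 2) (Fin 2) ℂ => t * v + 2 • (v * t)) := by
  set c : ℂ := v.det with hc
  have h11 : v 1 1 = - v 0 0 := by
    rw [Matrix.trace_fin_two] at him
    linear_combination him
  have hv2 : v * v = (-c) • (1 : Matrix (Fin 2) (Fin 2) ℂ) := by
    ext i j
    fin_cases i <;> fin_cases j <;>
      simp [Matrix.mul_apply, Fin.sum_univ_two, Matrix.det_fin_two, h11, Matrix.one_apply, hc] <;>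
      ring
  intro t1 t2 h
  simp only [] at h
  set t := t1 - t2 with ht
  have hcast : ∀ m : Matrix (Fin 2) (Fin 2) ℂ, (2:ℂ) • m = 2 • m := fun m => by
    rw [show (2:ℂ) = ((2:ℕ):ℂ) by norm_num, Nat.cast_smul_eq_nsmul]
  have h0 : t * v + (2:ℂ) • (v * t) = 0 := by
    rw [hcast]
    rw [ht, sub_mul, mul_sub, smul_sub]
    rw [sub_add_sub_comm, h, sub_self]
  have h1 : t * (v * v) + (2:ℂ) • (v * (t * v)) = 0 := by
    have := congrArg (· * v) h0
    simpa [add_mul, smul_mul_assoc, mul_assoc] using this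
  have h2 : v * (t * v) + (2:ℂ) • (v * v * t) = 0 := by
    have := congrArg (v * ·) h0
    simpa [mul_add, mul_smul_comm, mul_assoc] using this
  rw [hv2, smul_mul_assoc, one_mul] at h2
  rw [hv2, mul_smul_comm, mul_one] at h1
  have hx : v * (t * v) = ((2:ℂ) * c) • t := by
    have h2' := eq_neg_of_add_eq_zero_left h2
    rw [h2', smul_smul, ← neg_smul]
    norm_num
  rw [hx, smul_smul, ← add_smul] at h1
  rw [show -c + 2 * (2 * c) = (3:ℂ) * c by ring] at h1
  have ht0 : t = 0 := by
    rcases smul_eq_zero.mp h1 with h | h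
    · exact absurd h (mul_ne_zero three_ne_zero hq)
    · exact h
  exact sub_eq_zero.mp ht0
end

section
/- For X a 3×3 traceless complex matrix and θ a skew-symmetric bilinear form on 𝔰𝔩₃ lying in the kernel of the projection ∧²𝔰𝔩₃ → 𝔰𝔩₃ given by the Lie bracket, the cubic p_θ(X) = θ(X, X² − (1/3)trace(X²)·I) vanishes whenever X is the traceless projection of a rank-one matrix: if X = Z − (trace Z/3)I with Z² = trace(Z)·Z, then X² − (1/3)trace(X²)I = (trace(Z)/3)·X, hence p_θ(X) = 0. -/
open Matrix

/-- If `Z² = trace(Z)·Z` (rank ≤ 1 condition) and `X = Z − (trace Z/3)·I` is its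
traceless part, then `X² − (1/3)trace(X²)·I = (trace(Z)/3)·X`; in particular for any
alternating bilinear form `θ`, the cubic `p_θ(X) = θ(X, X² − (1/3)trace(X²)·I)` vanishes. -/
theorem stmt_13 (Z : Matrix (Fin 3) (Fin 3) ℂ) (hZ : Z * Z = Z.trace • Z)
    (X : Matrix (Fin 3) (Fin 3) ℂ) (hX : X = Z - (Z.trace / 3) • 1)
    (θ : Matrix (Fin 3) (Fin 3) ℂ →ₗ[ℂ] Matrix (Fin 3) (Fin 3) ℂ →ₗ[ℂ] ℂ)
    (hθ : ∀ A, θ A A = 0) :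
    X * X - (((X * X).trace / 3) • 1 : Matrix (Fin 3) (Fin 3) ℂ) = (Z.trace / 3) • X ∧
    θ X (X * X - ((X * X).trace / 3) • 1) = 0 := by
  have hsq : X * X = (Z.trace / 3) • Z + (Z.trace * Z.trace / 9) • 1 := by
    subst hX
    rw [sub_mul, mul_sub, mul_sub, hZ]
    simp only [smul_mul_assoc, mul_smul_comm, mul_one, one_mul, smul_smul]
    module
  have htr : (X * X).trace = 2 * Z.trace * Z.trace / 3 := by
    rw [hsq]
    simp [trace_smul, trace_one, Matrix.trace_add, smul_eq_mul]
    ring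
  have h1 : X * X - (((X * X).trace / 3) • 1 : Matrix (Fin 3) (Fin 3) ℂ)
      = (Z.trace / 3) • X := by
    rw [htr, hsq, hX]
    have : (2 * Z.trace * Z.trace / 3 / 3 : ℂ) = 2 * Z.trace * Z.trace / 9 := by ring
    rw [this]
    rw [smul_sub, smul_smul]
    have h2 : (Z.trace / 3 * (Z.trace / 3) : ℂ) = Z.trace * Z.trace / 9 := by ring
    rw [h2]
    module
  refine ⟨h1, ?_⟩
  rw [h1, LinearMap.map_smul, hθ, smul_zero]
end

section
/- In the Chow ring of the exceptional divisor computation for Y₂: with h³ = (h')³ = 0 and e³ = 5(h+h')e² − (10h² + 17hh' + 10(h')²)e + 18hh'(h+h'), and normalization h²(h')²e² = 1, one computes (h+h')³e³ = 30, (h+h')²e⁴ = 96, (h+h')e⁵ = 246, and hence 3⁶·1 − 3³·binom(6,3)·6 + 3²·binom(6,2)·30 − 3·binom(6,1)·96 + 246 = 57. -/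
/-- In the Chow ring of the exceptional divisor of `Z₂ → ℙ𝒥₃(ℂ)₀`, presented by
`h³ = h'³ = 0`, `e³ = 5(h+h')e² − (10h²+17hh'+10h'²)e + 18hh'(h+h')`, with the
degree functional normalized by `∫ h²h'²e² = 1`, one has `(h+h')³e³ = 30`,
`(h+h')²e⁴ = 96`, `(h+h')e⁵ = 246`, and hence
`deg Y₂ = 3⁶ − 3³·C(6,3)·6 + 3²·C(6,2)·30 − 3·C(6,1)·96 + 246 = 57`. -/
theorem stmt_17 (A : Type*) [CommRing A] (h h' e : A)
    (hh3 : h ^ 3 = 0) (hh'3 : h' ^ 3 = 0)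
    (he3 : e ^ 3 = 5 * (h + h') * e ^ 2
      - (10 * h ^ 2 + 17 * h * h' + 10 * h' ^ 2) * e + 18 * h * h' * (h + h'))
    (φ : A →+ ℤ) (hφ : φ (h ^ 2 * h' ^ 2 * e ^ 2) = 1) :
    φ ((h + h') ^ 3 * e ^ 3) = 30 ∧
    φ ((h + h') ^ 2 * e ^ 4) = 96 ∧
    φ ((h + h') * e ^ 5) = 246 ∧
    (3 ^ 6 * 1 - 3 ^ 3 * (Nat.choose 6 3 : ℤ) * 6 + 3 ^ 2 * (Nat.choose 6 2 : ℤ) * 30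
      - 3 * (Nat.choose 6 1 : ℤ) * 96 + 246 = 57) := by
  have k30 : (h + h') ^ 3 * e ^ 3 = (30:ℤ) • (h ^ 2 * h' ^ 2 * e ^ 2) := by
    rw [zsmul_eq_mul]
    push_cast
    linear_combination ((108:A) * h'^3 + (54:A) * h^1 * h'^2 + (-81:A) * e^1 * h'^2 + (-30:A) * e^1 * h^1 * h'^1 + (15:A) * e^2 * h'^1 + (1:A) * e^3) * hh3 + ((54:A) * h^2 * h'^1 + (-30:A) * e^1 * h^1 * h'^1 + (-81:A) * e^1 * h^2 + (15:A) * e^2 * h^1 + (1:A) * e^3) * hh'3 + ((3:A) * h^1 * h'^2 + (3:A) * h^2 * h'^1) * he3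
  have k96 : (h + h') ^ 2 * e ^ 4 = (96:ℤ) • (h ^ 2 * h' ^ 2 * e ^ 2) := by
    rw [zsmul_eq_mul]
    push_cast
    linear_combination ((540:A) * h'^3 + (270:A) * h^1 * h'^2 + (-351:A) * e^1 * h'^2 + (-132:A) * e^1 * h^1 * h'^1 + (38:A) * e^2 * h'^1 + (-10:A) * e^2 * h^1 + (5:A) * e^3) * hh3 + ((270:A) * h^2 * h'^1 + (-132:A) * e^1 * h^1 * h'^1 + (-351:A) * e^1 * h^2 + (-10:A) * e^2 * h'^1 + (38:A) * e^2 * h^1 + (5:A) * e^3) * hh'3 + ((15:A) * h^1 * h'^2 + (15:A) * h^2 * h'^1 + (1:A) * e^1 * h'^2 + (2:A) * e^1 * h^1 * h'^1 + (1:A) * e^1 * h^2) * he3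
  have k246 : (h + h') * e ^ 5 = (246:ℤ) • (h ^ 2 * h' ^ 2 * e ^ 2) := by
    rw [zsmul_eq_mul]
    push_cast
    linear_combination ((1728:A) * h'^3 + (864:A) * h^1 * h'^2 + (-1026:A) * e^1 * h'^2 + (-390:A) * e^1 * h^1 * h'^1 + (73:A) * e^2 * h'^1 + (-50:A) * e^2 * h^1 + (15:A) * e^3) * hh3 + ((864:A) * h^2 * h'^1 + (-390:A) * e^1 * h^1 * h'^1 + (-1026:A) * e^1 * h^2 + (-50:A) * e^2 * h'^1 + (73:A) * e^2 * h^1 + (15:A) * e^3) * hh'3 + ((48:A) * h^1 * h'^2 + (48:A) * h^2 * h'^1 + (5:A) * e^1 * h'^2 + (10:A) * e^1 * h^1 * h'^1 + (5:A) * e^1 * h^2 + (1:A) * e^2 * h'^1 + (1:A) * e^2 * h^1) * he3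
  refine ⟨?_, ?_, ?_, by norm_num [Nat.choose]⟩ <;>
    [rw [k30]; rw [k96]; rw [k246]] <;> rw [map_zsmul, hφ] <;> norm_num
end
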